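/- arXiv:1805.11835 — 2 statements merged into one kernel-verified Lean document; each statement's English description precedes it below -/
import Mathlib

section
/- Fix a depth k ≥ 1 and let ReLU(v) denote the componentwise map v ↦ max(v, 0). Let W₁ and D₂, …, D_k be arbitrary real matrices, let W₂, …, W_k be matrices with all entries nonnegative, and let b₁, …, b_k be bias vectors. For x ∈ ℝᵈ define z₁ = ReLU(W₁ x + b₁) and z_i = ReLU(W_i z_{i−1} + D_i x + b_i) for i = 2, …, k. Then every coordinate of z_k is a convex function of x on ℝᵈ. -/
/-! Induction on the depth. A coordinate of the next layer is `max (·) 0` of a nonnegative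
combination of coordinates of the previous layer, convex by induction, plus an affine function of
the input. Nonnegativity of `W` is exactly what keeps that combination convex, while `W₁` and `D`
only enter through affine terms, whose sign does not matter. -/

/-- A `k+1`-layer feedforward ReLU network with feedforward weights `W`,
"passthrough" weights `D`, biases `b` and input `x` indexed by `ι`.
Layer dimensions are `n 1, n 2, …`; `net … x i` is the layer `z_{i+1}`:
`z₁ = ReLU (W₁ x + b₁)` and `z_i = ReLU (W_i z_{i-1} + D_i x + b_i)` for `i ≥ 2`. -/
noncomputable def net {ι : Type} [Fintype ι] (n : ℕ → ℕ)
    (W1 : Matrix (Fin (n 1)) ι ℝ)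
    (W : (i : ℕ) → Matrix (Fin (n i)) (Fin (n (i - 1))) ℝ)
    (D : (i : ℕ) → Matrix (Fin (n i)) ι ℝ)
    (b : (i : ℕ) → Fin (n i) → ℝ)
    (x : ι → ℝ) : (i : ℕ) → Fin (n (i + 1)) → ℝ
  | 0 => fun j => max ((W1.mulVec x + b 1) j) 0
  | (i + 1) => fun j =>
      max (((W (i + 2)).mulVec (net n W1 W D b x i) + (D (i + 2)).mulVec x + b (i + 2)) j) 0

open Matrix

section Convexity

variable {E ι : Type*} [AddCommMonoid E] [Module ℝ E] {s : Set E}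

theorem ConvexOn.sum {f : ι → E → ℝ} (t : Finset ι) (hf : ∀ i ∈ t, ConvexOn ℝ s (f i))
    (hs : Convex ℝ s) : ConvexOn ℝ s (fun x => ∑ i ∈ t, f i x) := by
  classical
  induction t using Finset.induction_on with
  | empty => simpa using convexOn_const (0 : ℝ) hs
  | insert a t ha ih =>
    simp only [Finset.sum_insert ha]
    exact (hf a (t.mem_insert_self a)).add (ih fun i hi => hf i (Finset.mem_insert_of_mem hi))

theorem ConvexOn.max_zero {f : E → ℝ} (hf : ConvexOn ℝ s f) :
    ConvexOn ℝ s (fun x => max (f x) 0) :=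
  hf.sup (convexOn_const 0 hf.1)

variable [Fintype ι] {m : Type*}

theorem convexOn_mulVec_add_apply (M : Matrix m ι ℝ) (c : m → ℝ) (j : m) {s : Set (ι → ℝ)}
    (hs : Convex ℝ s) : ConvexOn ℝ s (fun x => (M *ᵥ x + c) j) :=
  ((LinearMap.proj j ∘ₗ M.mulVecLin).convexOn hs).add_const (c j)

theorem ConvexOn.mulVec_apply_of_nonneg {M : Matrix m ι ℝ} {g : E → ι → ℝ}
    (hg : ∀ l, ConvexOn ℝ s (fun x => g x l)) (hM : ∀ j l, 0 ≤ M j l) (hs : Convex ℝ s)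
    (j : m) : ConvexOn ℝ s (fun x => (M *ᵥ g x) j) :=
  ConvexOn.sum Finset.univ (fun l _ => (hg l).smul (hM j l)) hs

end Convexity

/-- **Input convexity condition of Amos et al.**
Fix a depth `k + 1 ≥ 1`.  If the hidden-to-hidden weights `W₂, …, W_{k+1}` are
nonnegative (while the first-layer weights `W₁` and passthrough weights
`D₂, …, D_{k+1}` may have arbitrary sign) then every coordinate of the output
layer `z_{k+1}` of the ReLU network is a convex function of the input `x` on `ℝᵈ`. -/
theorem icnn_amos_inputConvex (d k : ℕ) (n : ℕ → ℕ)
    (W1 : Matrix (Fin (n 1)) (Fin d) ℝ)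
    (W : (i : ℕ) → Matrix (Fin (n i)) (Fin (n (i - 1))) ℝ)
    (D : (i : ℕ) → Matrix (Fin (n i)) (Fin d) ℝ)
    (b : (i : ℕ) → Fin (n i) → ℝ)
    (hW : ∀ i, 2 ≤ i → i ≤ k + 1 → ∀ j l, 0 ≤ W i j l)
    (j : Fin (n (k + 1))) :
    ConvexOn ℝ Set.univ (fun x : Fin d → ℝ => net n W1 W D b x k j) := by
  induction k with
  | zero => exact (convexOn_mulVec_add_apply W1 (b 1) j convex_univ).max_zero
  | succ k ih =>
    have hprev (l : Fin (n (k + 1))) :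
        ConvexOn ℝ Set.univ (fun x : Fin d → ℝ => net n W1 W D b x k l) :=
      ih (fun i h2 hk => hW i h2 (hk.trans (k + 1).le_succ)) l
    have hhidden := ConvexOn.mulVec_apply_of_nonneg hprev
      (hW (k + 2) (by omega) le_rfl) convex_univ j
    have hpassthrough := convexOn_mulVec_add_apply (D (k + 2)) (b (k + 2)) j convex_univ
    simpa only [net, Pi.add_apply, add_assoc] using (hhidden.add hpassthrough).max_zero
end

section
/- Let K ≥ 1 and define f : ℝ^K → ℝ by f(x) = ∑_{i=1}^{K} max(xᵢ, 0). Suppose a finite family of affine functions L₁, …, L_N, Lⱼ(x) = aⱼ·x + bⱼ, satisfies f(x) = max_{j=1,…,N} Lⱼ(x) for all x ∈ ℝ^K. Then N ≥ 2^K. -/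
/-- **Theorem 2, first statement (lower bound for max-affine representations).**
Let `K ≥ 1` and `f : ℝᴷ → ℝ`, `f x = ∑ᵢ max (xᵢ) 0` (a single-hidden-layer
ReLU network with `K` activation units).  If a finite family of affine
functions `Lⱼ(x) = aⱼ⋅x + bⱼ`, `j = 1, …, N`, satisfies
`f x = maxⱼ Lⱼ(x)` for all `x`, then `N ≥ 2^K`. -/
theorem maxAffine_representation_lower_bound (K N : ℕ) (hK : 1 ≤ K)
    (hne : (Finset.univ : Finset (Fin N)).Nonempty)
    (a : Fin N → Fin K → ℝ) (b : Fin N → ℝ)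
    (hrep : ∀ x : Fin K → ℝ,
      ∑ i, max (x i) 0 =
        Finset.univ.sup' hne (fun j : Fin N => (∑ i, a j i * x i) + b j)) :
    2 ^ K ≤ N := by
  classical
  -- every affine piece is a minorant of f
  have hle : ∀ (j : Fin N) (x : Fin K → ℝ),
      (∑ i, a j i * x i) + b j ≤ ∑ i, max (x i) 0 := by
    intro j x
    rw [hrep x]
    exact Finset.le_sup' (fun j : Fin N => (∑ i, a j i * x i) + b j)
      (Finset.mem_univ j)
  -- for each sign pattern, choose a piece attaining the max at x₀ ε
  have hch : ∀ ε : Fin K → Bool, ∃ j : Fin N,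
      (∑ i, a j i * (if ε i then (1:ℝ) else -1)) + b j
        = ∑ i, max (if ε i then (1:ℝ) else -1) 0 := by
    intro ε
    obtain ⟨j, -, hj⟩ := Finset.exists_mem_eq_sup' hne
        (fun j : Fin N => (∑ i, a j i * (if ε i then (1:ℝ) else -1)) + b j)
    refine ⟨j, ?_⟩
    rw [hrep (fun i => if ε i then (1:ℝ) else -1)]
    exact hj.symm
  choose φ hφ using hch
  -- gradient identification
  have keypt : ∀ (ε : Fin K → Bool) (i : Fin K) (t : ℝ), |t| ≤ 1/2 →
      a (φ ε) i * t ≤ (if ε i then (1:ℝ) else 0) * t := by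
    intro ε i t ht
    set x₀ : Fin K → ℝ := fun k => if ε k then (1:ℝ) else -1 with hx₀
    set xt : Fin K → ℝ := Function.update x₀ i (x₀ i + t) with hxt
    have habs := abs_le.mp ht
    have hxti : xt i = x₀ i + t := by rw [hxt]; exact Function.update_self i _ x₀
    have hxtk : ∀ k, k ≠ i → xt k = x₀ k := by
      intro k hk; rw [hxt]; exact Function.update_of_ne hk _ x₀
    have hf : ∑ k, max (xt k) 0
        = (∑ k, max (x₀ k) 0) + (if ε i then t else 0) := by
      have hdiff : ∑ k, (max (xt k) 0 - max (x₀ k) 0)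
          = (if ε i then t else 0) := by
        rw [Finset.sum_eq_single i]
        · rw [hxti]
          by_cases h : ε i
          · have hx : x₀ i = 1 := by rw [hx₀]; simp [h]
            rw [if_pos h, hx, max_eq_left (by linarith), max_eq_left (by norm_num)]
            ring
          · have hx : x₀ i = -1 := by rw [hx₀]; simp [h]
            rw [if_neg h, hx, max_eq_right (by linarith), max_eq_right (by norm_num)]
            ring
        · intro k _ hk
          rw [hxtk k hk]; ring
        · intro h; exact absurd (Finset.mem_univ i) h
      rw [Finset.sum_sub_distrib] at hdiff
      linarith
    have hL : (∑ k, a (φ ε) k * xt k)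
        = (∑ k, a (φ ε) k * x₀ k) + a (φ ε) i * t := by
      have hdiff : ∑ k, (a (φ ε) k * xt k - a (φ ε) k * x₀ k)
          = a (φ ε) i * t := by
        rw [Finset.sum_eq_single i]
        · rw [hxti]; ring
        · intro k _ hk
          rw [hxtk k hk]; ring
        · intro h; exact absurd (Finset.mem_univ i) h
      rw [Finset.sum_sub_distrib] at hdiff
      linarith
    have h1 := hle (φ ε) xt
    have h2 := hφ ε
    rw [hf, hL] at h1
    by_cases h : ε i
    · rw [if_pos h] at h1 ⊢; linarith
    · rw [if_neg h] at h1 ⊢; linarith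
  have key : ∀ ε i, a (φ ε) i = if ε i then (1:ℝ) else 0 := by
    intro ε i
    have h1 := keypt ε i (1/2) (by rw [abs_of_pos] <;> norm_num)
    have h2 := keypt ε i (-(1/2)) (by rw [abs_of_neg] <;> norm_num)
    linarith
  have hinj : Function.Injective φ := by
    intro ε ε' h
    funext i
    have h1 := key ε i
    rw [h, key ε' i] at h1
    by_cases hb : ε i <;> by_cases hb' : ε' i <;> simp_all
  calc 2 ^ K = Fintype.card (Fin K → Bool) := by simp
    _ ≤ Fintype.card (Fin N) := Fintype.card_le_of_injective φ hinj
    _ = N := Fintype.card_fin N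
end
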